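/- The domain 𝒮 of separable preferences is maximal for the class 𝒢 of all tops-only voting rules on 𝒮 that satisfy participation; that is, (i) 𝒮 itself satisfies the two defining conditions of maximality for 𝒢, and (ii) any domain 𝒮* with 𝒮 ⊆ 𝒮* ⊆ 𝒰_𝒪 that is maximal for 𝒢 equals 𝒮. Here maximality of 𝒮* for 𝒢 means: (a) for each f ∈ 𝒢 the tops-only extension of f to 𝒮* satisfies participation, and (b) for each preference P_0 ∈ 𝒰_𝒪 \ 𝒮* there is f ∈ 𝒢 whose tops-only extension to 𝒮* ∪ {P_0} violates participation. -/

import Mathlib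

/-! ## Basic framework: preferences, profiles, voting rules, axioms -/

/-- A preference is a strict linear order on the set `A` of alternatives, encoded as a
`LinearOrder` structure on `A`; alternative `x` is strictly preferred to `y` iff `y < x`
(i.e. "greater is better"). -/
abbrev Pref (A : Type*) := LinearOrder A

/-- Strict preference: `x` is strictly preferred to `y` under `p`. -/
def Pref.pref {A : Type*} (p : Pref A) (x y : A) : Prop := p.lt y x

/-- Weak preference (the weak counterpart `R` of the strict preference `P`):
`x` is weakly preferred to `y` under `p`. -/
def Pref.wpref {A : Type*} (p : Pref A) (x y : A) : Prop := p.le y x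

/-- The top (most preferred) alternative of a preference. -/
noncomputable def Pref.top {A : Type*} [Fintype A] [Nonempty A] (p : Pref A) : A :=
  @Finset.max' A p Finset.univ Finset.univ_nonempty

/-- The bottom (least preferred) alternative of a preference. -/
noncomputable def Pref.bot {A : Type*} [Fintype A] [Nonempty A] (p : Pref A) : A :=
  @Finset.min' A p Finset.univ Finset.univ_nonempty

/-- A profile over the society `N` (a finite set of voters, indexed by naturals):
it assigns a preference to each member of `N`. -/
abbrev Profile (A : Type*) (N : Finset ℕ) := (i : ℕ) → i ∈ N → Pref A

/-- The profile `P` takes values in the domain `D` of preferences. -/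
def Profile.inDomain {A : Type*} {N : Finset ℕ} (P : Profile A N) (D : Set (Pref A)) : Prop :=
  ∀ i (hi : i ∈ N), P i hi ∈ D

/-- A (variable-population) voting rule: it assigns an alternative to every society
together with a profile over it. -/
abbrev Rule (A : Type*) := (N : Finset ℕ) → Profile A N → A

/-- Ontoness on the domain `D`: for every society and every alternative, some
`D`-profile realizes that alternative. -/
def OntoOn {A : Type*} (D : Set (Pref A)) (f : Rule A) : Prop :=
  ∀ N : Finset ℕ, N.Nonempty → ∀ a : A, ∃ P : Profile A N, P.inDomain D ∧ f N P = a

/-- Tops-onliness on the domain `D`: two `D`-profiles with the same tops get the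
same outcome. -/
def TopsOnlyOn {A : Type*} [Fintype A] [Nonempty A] (D : Set (Pref A)) (f : Rule A) : Prop :=
  ∀ N : Finset ℕ, N.Nonempty → ∀ P P' : Profile A N, P.inDomain D → P'.inDomain D →
    (∀ i (hi : i ∈ N), (P i hi).top = (P' i hi).top) → f N P = f N P'

/-- False-name-proofness on the domain `D`: if a voter `i` of the society `N` casts,
under fresh identities `N'`, extra votes identical to her own preference, the outcome
does not improve for her. -/
def FalseNameProofOn {A : Type*} (D : Set (Pref A)) (f : Rule A) : Prop :=
  ∀ N N' : Finset ℕ, N.Nonempty → N'.Nonempty → Disjoint N N' →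
    ∀ P : Profile A (N ∪ N'), P.inDomain D →
      ∀ i (hi : i ∈ N),
        (∀ j (hj : j ∈ N'),
            P j (Finset.mem_union_right N hj) = P i (Finset.mem_union_left N' hi)) →
        (P i (Finset.mem_union_left N' hi)).wpref
          (f N (fun j hj => P j (Finset.mem_union_left N' hj)))
          (f (N ∪ N') P)

/-- Participation on the domain `D`: no voter gains by abstaining. -/
def ParticipationOn {A : Type*} (D : Set (Pref A)) (f : Rule A) : Prop :=
  ∀ N : Finset ℕ, 2 ≤ N.card → ∀ P : Profile A N, P.inDomain D →
    ∀ i (hi : i ∈ N),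
      (P i hi).wpref (f N P) (f (N.erase i) (fun j hj => P j (Finset.mem_of_mem_erase hj)))

lemma mem_of_mem_image_perm {σ : Equiv.Perm ℕ} {N : Finset ℕ} {j : ℕ}
    (hj : j ∈ N.image σ) : σ.symm j ∈ N := by
  obtain ⟨i, hi, rfl⟩ := Finset.mem_image.mp hj
  simpa using hi

/-- The permuted profile `σ(P_N)` over the society `σ(N)`: voter `σ i` gets the
preference `P i`. -/
def permProfile {A : Type*} (σ : Equiv.Perm ℕ) {N : Finset ℕ} (P : Profile A N) :
    Profile A (N.image σ) :=
  fun j hj => P (σ.symm j) (mem_of_mem_image_perm hj)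

/-- Anonymity on the domain `D`: permuting the voters' identities does not change
the outcome. -/
def AnonymousOn {A : Type*} (D : Set (Pref A)) (f : Rule A) : Prop :=
  ∀ (σ : Equiv.Perm ℕ) (N : Finset ℕ), N.Nonempty → ∀ P : Profile A N, P.inDomain D →
    f (N.image σ) (permProfile σ P) = f N P

/-- Relabeling a preference along a permutation `γ` of the alternatives: in the new
preference, `γ x` is strictly preferred to `γ y` iff `x` was strictly preferred to `y`. -/
noncomputable def Pref.relabel {A : Type*} (p : Pref A) (γ : Equiv.Perm A) : Pref A :=
  @LinearOrder.lift' A A p γ.symm γ.symm.injective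

/-- Neutrality on the domain `D`: relabeling the alternatives by a permutation `γ`
relabels the outcome accordingly. -/
def NeutralOn {A : Type*} (D : Set (Pref A)) (f : Rule A) : Prop :=
  ∀ (γ : Equiv.Perm A) (N : Finset ℕ), N.Nonempty → ∀ P : Profile A N, P.inDomain D →
    γ (f N P) = f N (fun i hi => (P i hi).relabel γ)

/-! ## The domain of preferences over subsets of a set `O` of objects -/

/-- Object neutrality: permuting the objects by `μ` (which permutes every subset of
objects pointwise) relabels the outcome accordingly. -/
def ObjectNeutralOn {O : Type*} [Fintype O] [DecidableEq O]
    (D : Set (Pref (Finset O))) (f : Rule (Finset O)) : Prop :=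
  ∀ (μ : Equiv.Perm O) (N : Finset ℕ), N.Nonempty →
    ∀ P : Profile (Finset O) N, P.inDomain D →
      (f N P).image μ = f N (fun i hi => (P i hi).relabel μ.finsetCongr)

/-- A preference over subsets of objects is separable if adding an object `x ∉ S` to a
set `S` improves the set exactly when `{x}` is preferred to `∅`. -/
def Separable {O : Type*} [Fintype O] [DecidableEq O] (p : Pref (Finset O)) : Prop :=
  ∀ (S : Finset O) (x : O), x ∉ S → (p.pref (insert x S) S ↔ p.pref {x} (∅ : Finset O))

/-- The domain of separable preferences over subsets of objects. -/
def SepDom (O : Type*) [Fintype O] [DecidableEq O] : Set (Pref (Finset O)) :=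
  {p | Separable p}

/-- `t(P_N)`: the set of distinct top sets of the profile `P`. -/
noncomputable def distinctTops {O : Type*} [Fintype O] [DecidableEq O] {N : Finset ℕ}
    (P : Profile (Finset O) N) : Finset (Finset O) :=
  N.attach.image fun i => (P i.1 i.2).top

/-- The rule `f^>`: an object is chosen iff it belongs to strictly more than half of the
distinct top sets of the profile. -/
noncomputable def fGt (O : Type*) [Fintype O] [DecidableEq O] : Rule (Finset O) :=
  fun N P =>
    Finset.univ.filter fun x =>
      (distinctTops P).card < 2 * ((distinctTops P).filter fun T => x ∈ T).card

/-- The rule `f^≥`: an object is chosen iff it belongs to at least half of the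
distinct top sets of the profile. -/
noncomputable def fGe (O : Type*) [Fintype O] [DecidableEq O] : Rule (Finset O) :=
  fun N P =>
    Finset.univ.filter fun x =>
      (distinctTops P).card ≤ 2 * ((distinctTops P).filter fun T => x ∈ T).card

/-- `g` is the tops-only extension to the domain `Dbig` (⊇ separable preferences) of the
tops-only rule `f` defined on the separable domain: on every `Dbig`-profile `P`, `g`
agrees with the value of `f` at any separable profile `Q` having the same tops as `P`. -/
def IsTopsOnlyExtensionOn {O : Type*} [Fintype O] [DecidableEq O]
    (Dbig : Set (Pref (Finset O))) (f g : Rule (Finset O)) : Prop :=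
  ∀ N : Finset ℕ, N.Nonempty →
    ∀ P : Profile (Finset O) N, P.inDomain Dbig →
      ∀ Q : Profile (Finset O) N, Q.inDomain (SepDom O) →
        (∀ i (hi : i ∈ N), (P i hi).top = (Q i hi).top) → g N P = f N Q

/-- The class `𝒢` of all tops-only voting rules on the domain of separable preferences
that satisfy participation. -/
def RuleClassG (O : Type*) [Fintype O] [DecidableEq O] : Set (Rule (Finset O)) :=
  {f | TopsOnlyOn (SepDom O) f ∧ ParticipationOn (SepDom O) f}

/-- The domain `Dstar` (with `𝒮 ⊆ Dstar ⊆ 𝒰_𝒪`) is maximal for the class `G ⊆ 𝒢`: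
(a) for each `f ∈ G`, every tops-only extension of `f` to `Dstar` satisfies
participation; and (b) for each preference `P0 ∉ Dstar` there is `f ∈ G` such that every
tops-only extension of `f` to `Dstar ∪ {P0}` violates participation. -/
def MaximalForG (O : Type*) [Fintype O] [DecidableEq O]
    (Dstar : Set (Pref (Finset O))) (G : Set (Rule (Finset O))) : Prop :=
  (∀ f ∈ G, ∀ g : Rule (Finset O), IsTopsOnlyExtensionOn Dstar f g →
      ParticipationOn Dstar g) ∧
  (∀ P0 : Pref (Finset O), P0 ∉ Dstar →
      ∃ f ∈ G, ∀ g : Rule (Finset O), IsTopsOnlyExtensionOn (Dstar ∪ {P0}) f g →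
        ¬ ParticipationOn (Dstar ∪ {P0}) g)

/-!
Under a separable preference, adding an object of the top set or dropping an object outside
it never hurts. A quota rule applied to the distinct tops of a profile moves towards a newly
added top, so the strict and weak majority rules satisfy participation on `𝒮`; and an
extension of a tops-only rule agrees with it on `𝒮`.

A non-separable `P0` has an object `x` and sets `S`, `S'` not containing it with
`S ≻ S ∪ {x}` and `S' ∪ {x} ≻ S'`. If `x` is in the top of `P0`, the strict majority over the
tops `S`, `S ∪ {x}` of two separable voters is `S`, and it becomes `S ∪ {x}` when `P0` joins;
otherwise the weak majority over the tops `S'`, `S' ∪ {x}` falls from `S' ∪ {x}` to `S'`.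
Every extension of that rule to a domain containing `P0` thus violates participation.
-/

lemma Pref.le_top {A : Type*} [Fintype A] [Nonempty A] (p : Pref A) (a : A) : p.le a p.top :=
  @Finset.le_max' _ p Finset.univ a (Finset.mem_univ a)

namespace Separable

variable {O : Type*} [Fintype O] [DecidableEq O] {p : Pref (Finset O)}

lemma mem_top_iff (hp : Separable p) {x : O} : x ∈ p.top ↔ p.pref {x} ∅ := by
  constructor
  · intro hx
    by_contra hbad
    have hle : p.le p.top (p.top.erase x) := by
      have := mt (hp (p.top.erase x) x (Finset.notMem_erase x _)).mp hbad
      rwa [Finset.insert_erase hx, Pref.pref, @not_lt _ p] at this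
    have htop : p.top.erase x = p.top := @le_antisymm _ p.toPartialOrder _ _ (p.le_top _) hle
    exact Finset.notMem_erase x p.top (by rwa [htop])
  · intro hgood
    by_contra hx
    exact (@not_lt _ p _ _).mpr (p.le_top _) ((hp p.top x hx).mpr hgood)

lemma le_union_of_subset_top (hp : Separable p) {C : Finset O} (hC : C ⊆ p.top)
    (B : Finset O) : p.le B (B ∪ C) := by
  induction C using Finset.induction_on with
  | empty => simp only [Finset.union_empty]; exact @le_refl _ p.toPreorder B
  | insert x C _ ih =>
    rw [Finset.insert_subset_iff] at hC
    refine @le_trans _ p.toPreorder _ _ _ (ih hC.2) ?_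
    rw [Finset.union_insert]
    by_cases hx : x ∈ B ∪ C
    · rw [Finset.insert_eq_of_mem hx]
      exact @le_refl _ p.toPreorder _
    · exact @le_of_lt _ p.toPreorder _ _ ((hp _ x hx).mpr (hp.mem_top_iff.mp hC.1))

lemma le_sdiff_of_disjoint_top (hp : Separable p) {C : Finset O} (hC : Disjoint C p.top)
    (B : Finset O) : p.le B (B \ C) := by
  induction C using Finset.induction_on with
  | empty => simp only [Finset.sdiff_empty]; exact @le_refl _ p.toPreorder B
  | insert x C _ ih =>
    rw [Finset.disjoint_insert_left] at hC
    refine @le_trans _ p.toPreorder _ _ _ (ih hC.2) ?_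
    rw [Finset.sdiff_insert]
    by_cases hx : x ∈ B \ C
    · have := mt (hp ((B \ C).erase x) x (Finset.notMem_erase x _)).mp
        (mt hp.mem_top_iff.mpr hC.1)
      rwa [Finset.insert_erase hx, Pref.pref, @not_lt _ p] at this
    · rw [Finset.erase_eq_of_notMem hx]
      exact @le_refl _ p.toPreorder _

lemma le_of_inter_top_subset_of_subset_union_top (hp : Separable p) {A B : Finset O}
    (hgood : B ∩ p.top ⊆ A) (hbad : A ⊆ B ∪ p.top) : p.le B A := by
  have hdisj : Disjoint (B \ A) p.top := by
    rw [Finset.disjoint_left]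
    intro y hy hyt
    rw [Finset.mem_sdiff] at hy
    exact hy.2 (hgood (Finset.mem_inter.mpr ⟨hy.1, hyt⟩))
  have hA : (B ∪ A ∩ p.top) \ (B \ A) = A := by
    ext y
    have := @hgood y
    have := @hbad y
    simp only [Finset.mem_sdiff, Finset.mem_union, Finset.mem_inter] at *
    tauto
  rw [← hA]
  exact @le_trans _ p.toPreorder _ _ _
    (hp.le_union_of_subset_top Finset.inter_subset_right B) (hp.le_sdiff_of_disjoint_top hdisj _)

end Separable

section UtilityPref

variable {O : Type*} [Fintype O]

noncomputable def utilityPref (u : Finset O → ℤ) : Pref (Finset O) :=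
  LinearOrder.lift' (fun S => toLex (u S, Fintype.equivFin (Finset O) S))
    fun _ _ h => (Fintype.equivFin (Finset O)).injective (congrArg (fun z => (ofLex z).2) h)

lemma utilityPref_lt_iff {u : Finset O → ℤ} {A B : Finset O} (h : u A ≠ u B) :
    (utilityPref u).lt A B ↔ u A < u B := by
  change toLex (u A, Fintype.equivFin (Finset O) A) <
    toLex (u B, Fintype.equivFin (Finset O) B) ↔ _
  rw [Prod.Lex.toLex_lt_toLex]
  simp [h]

variable [DecidableEq O]

lemma separable_utilityPref_sum {w : O → ℤ} (hw : ∀ x, w x ≠ 0) :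
    Separable (utilityPref fun S => ∑ x ∈ S, w x) := by
  intro S x hx
  simp only [Pref.pref]
  rw [utilityPref_lt_iff (by simpa [Finset.sum_insert hx] using hw x),
    utilityPref_lt_iff (by simpa using (hw x).symm), Finset.sum_insert hx]
  simp

noncomputable def sepPref (T : Finset O) : Pref (Finset O) :=
  utilityPref fun S => ∑ x ∈ S, if x ∈ T then 1 else -1

lemma sepPref_mem_sepDom (T : Finset O) : sepPref T ∈ SepDom O :=
  separable_utilityPref_sum fun x => by split_ifs <;> decide

lemma top_sepPref (T : Finset O) : (sepPref T).top = T := by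
  ext x
  rw [(sepPref_mem_sepDom T).mem_top_iff, Pref.pref, sepPref,
    utilityPref_lt_iff (by rw [Finset.sum_singleton]; split_ifs <;> simp), Finset.sum_empty,
    Finset.sum_singleton]
  split_ifs <;> simp [*]

end UtilityPref

section TopsOnlyExtension

variable {O : Type*} [Fintype O] [DecidableEq O]

lemma ParticipationOn.mono {A : Type*} {D D' : Set (Pref A)} {g : Rule A}
    (h : ParticipationOn D g) (hD : D' ⊆ D) : ParticipationOn D' g :=
  fun N hN P hP => h N hN P fun i hi => hD (hP i hi)

lemma Profile.inDomain.erase {A : Type*} {N : Finset ℕ} {P : Profile A N} {D : Set (Pref A)}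
    (hP : P.inDomain D) (i : ℕ) :
    Profile.inDomain (N := N.erase i) (fun j hj => P j (Finset.mem_of_mem_erase hj)) D :=
  fun j _ => hP j _

lemma IsTopsOnlyExtensionOn.mono {D D' : Set (Pref (Finset O))} {f g : Rule (Finset O)}
    (h : IsTopsOnlyExtensionOn D f g) (hD : D' ⊆ D) : IsTopsOnlyExtensionOn D' f g :=
  fun N hN P hP => h N hN P fun i hi => hD (hP i hi)

lemma exists_isTopsOnlyExtensionOn {f : Rule (Finset O)} (hf : TopsOnlyOn (SepDom O) f)
    (D : Set (Pref (Finset O))) : ∃ g, IsTopsOnlyExtensionOn D f g :=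
  ⟨fun N P => f N fun i hi => sepPref (P i hi).top, fun N hN _ _ _ hQ htops =>
    hf N hN _ _ (fun _ _ => sepPref_mem_sepDom _) hQ fun i hi => by rw [top_sepPref, htops]⟩

lemma IsTopsOnlyExtensionOn.apply_eq {D : Set (Pref (Finset O))} {f g : Rule (Finset O)}
    (hg : IsTopsOnlyExtensionOn D f g) {N : Finset ℕ} (hN : N.Nonempty)
    {P : Profile (Finset O) N} (hP : P.inDomain D) :
    g N P = f N fun i hi => sepPref (P i hi).top :=
  hg N hN P hP _ (fun _ _ => sepPref_mem_sepDom _) fun _ _ => (top_sepPref _).symm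

lemma IsTopsOnlyExtensionOn.participationOn_sepDom {f g : Rule (Finset O)}
    (hg : IsTopsOnlyExtensionOn (SepDom O) f g) (hf : ParticipationOn (SepDom O) f) :
    ParticipationOn (SepDom O) g := by
  intro N hcard P hP i hi
  have hN : N.Nonempty := Finset.card_pos.mp (by omega)
  have hNi : (N.erase i).Nonempty := by
    rw [← Finset.card_pos, Finset.card_erase_of_mem hi]
    omega
  rw [Pref.wpref, hg N hN P hP P hP fun _ _ => rfl,
    hg _ hNi _ (hP.erase i) _ (hP.erase i) fun _ _ => rfl]
  exact hf N hcard P hP i hi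

end TopsOnlyExtension

section Counting

variable {O : Type*} [DecidableEq O] {S : Finset O} {x : O}

lemma card_filter_mem_insert {𝒯 : Finset (Finset O)} {T : Finset O} (hT : T ∉ 𝒯) (y : O) :
    ((insert T 𝒯).filter fun U => y ∈ U).card =
      (𝒯.filter fun U => y ∈ U).card + if y ∈ T then 1 else 0 := by
  rw [Finset.filter_insert]
  split_ifs
  · exact Finset.card_insert_of_notMem fun h => hT (Finset.mem_of_mem_filter T h)
  · rfl

lemma card_pair_insert (hx : x ∉ S) : ({S, insert x S} : Finset (Finset O)).card = 2 :=
  Finset.card_pair fun h => hx (h ▸ Finset.mem_insert_self x S)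

lemma card_filter_mem_pair_insert (hx : x ∉ S) (y : O) :
    (({S, insert x S} : Finset (Finset O)).filter fun T => y ∈ T).card =
      if y ∈ S then 2 else if y = x then 1 else 0 := by
  have hS : S ∉ ({insert x S} : Finset (Finset O)) :=
    fun h => hx (Finset.mem_singleton.mp h ▸ Finset.mem_insert_self x S)
  rw [card_filter_mem_insert hS, Finset.filter_singleton]
  by_cases hyS : y ∈ S
  · simp [hyS]
  · by_cases hyx : y = x <;> simp [hyS, hyx, hx]

end Counting

section Quota

variable {O : Type*} [Fintype O] [DecidableEq O]

lemma mem_distinctTops {N : Finset ℕ} {P : Profile (Finset O) N} {T : Finset O} :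
    T ∈ distinctTops P ↔ ∃ i, ∃ hi : i ∈ N, (P i hi).top = T := by
  simp [distinctTops]

lemma distinctTops_congr {N : Finset ℕ} {P P' : Profile (Finset O) N}
    (h : ∀ i (hi : i ∈ N), (P i hi).top = (P' i hi).top) :
    distinctTops P = distinctTops P' := by
  ext T
  simp only [mem_distinctTops, h]

lemma distinctTops_eq_insert_erase {N : Finset ℕ} (P : Profile (Finset O) N) {i : ℕ}
    (hi : i ∈ N) :
    distinctTops P = insert (P i hi).top
      (distinctTops (N := N.erase i) fun j hj => P j (Finset.mem_of_mem_erase hj)) := by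
  ext T
  simp only [mem_distinctTops, Finset.mem_insert, Finset.mem_erase]
  constructor
  · rintro ⟨j, hj, rfl⟩
    by_cases hji : j = i
    · subst hji
      exact Or.inl rfl
    · exact Or.inr ⟨j, ⟨hji, hj⟩, rfl⟩
  · rintro (rfl | ⟨j, ⟨_, hj⟩, rfl⟩)
    exacts [⟨i, hi, rfl⟩, ⟨j, hj, rfl⟩]

lemma distinctTops_of_fun {N : Finset ℕ} (q : ℕ → Pref (Finset O)) :
    distinctTops (N := N) (fun i _ => q i) = N.image fun i => (q i).top := by
  ext T
  simp [mem_distinctTops]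

noncomputable def quota (R : ℕ → ℕ → Prop) [DecidableRel R] (𝒯 : Finset (Finset O)) :
    Finset O :=
  Finset.univ.filter fun x => R 𝒯.card (𝒯.filter fun T => x ∈ T).card

noncomputable def quotaRule (R : ℕ → ℕ → Prop) [DecidableRel R] : Rule (Finset O) :=
  fun _ P => quota R (distinctTops P)

variable {R : ℕ → ℕ → Prop} [DecidableRel R]

lemma mem_quota {𝒯 : Finset (Finset O)} {x : O} :
    x ∈ quota R 𝒯 ↔ R 𝒯.card (𝒯.filter fun T => x ∈ T).card := by
  simp [quota]

lemma Separable.le_quota_insert (hsucc : ∀ n k, R n k → R (n + 1) (k + 1))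
    (hpred : ∀ n k, R (n + 1) k → R n k) {p : Pref (Finset O)} (hp : Separable p)
    (𝒯 : Finset (Finset O)) : p.le (quota R 𝒯) (quota R (insert p.top 𝒯)) := by
  by_cases hT : p.top ∈ 𝒯
  · rw [Finset.insert_eq_of_mem hT]
    exact @le_refl _ p.toPreorder _
  apply hp.le_of_inter_top_subset_of_subset_union_top
  · intro x hx
    rw [Finset.mem_inter, mem_quota] at hx
    rw [mem_quota, Finset.card_insert_of_notMem hT, card_filter_mem_insert hT, if_pos hx.2]
    exact hsucc _ _ hx.1
  · intro x hx
    rw [Finset.mem_union, or_iff_not_imp_right]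
    intro hxT
    rw [mem_quota, Finset.card_insert_of_notMem hT, card_filter_mem_insert hT, if_neg hxT] at hx
    exact mem_quota.mpr (hpred _ _ hx)

lemma topsOnlyOn_quotaRule : TopsOnlyOn (SepDom O) (quotaRule (O := O) R) :=
  fun _ _ _ _ _ _ h => congrArg (quota R) (distinctTops_congr h)

lemma participationOn_quotaRule (hsucc : ∀ n k, R n k → R (n + 1) (k + 1))
    (hpred : ∀ n k, R (n + 1) k → R n k) : ParticipationOn (SepDom O) (quotaRule R) := by
  intro N _ P hP i hi
  rw [Pref.wpref, quotaRule, quotaRule, distinctTops_eq_insert_erase P hi]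
  exact Separable.le_quota_insert hsucc hpred (hP i hi) _

lemma fGt_eq_quotaRule : fGt O = quotaRule fun n k => n < 2 * k := rfl

lemma fGe_eq_quotaRule : fGe O = quotaRule fun n k => n ≤ 2 * k := rfl

lemma fGt_mem_ruleClassG : fGt O ∈ RuleClassG O := by
  rw [fGt_eq_quotaRule]
  exact ⟨topsOnlyOn_quotaRule,
    participationOn_quotaRule (fun _ _ h => by omega) fun _ _ h => by omega⟩

lemma fGe_mem_ruleClassG : fGe O ∈ RuleClassG O := by
  rw [fGe_eq_quotaRule]
  exact ⟨topsOnlyOn_quotaRule,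
    participationOn_quotaRule (fun _ _ h => by omega) fun _ _ h => by omega⟩

end Quota

section Violation

variable {O : Type*} [Fintype O] [DecidableEq O] {R : ℕ → ℕ → Prop} [DecidableRel R]

lemma not_participationOn_quotaRule {P0 : Pref (Finset O)} {T₁ T₂ : Finset O}
    (hworse : P0.pref (quota R {T₁, T₂}) (quota R (insert P0.top {T₁, T₂})))
    {g : Rule (Finset O)} (hg : IsTopsOnlyExtensionOn (SepDom O ∪ {P0}) (quotaRule R) g) :
    ¬ ParticipationOn (SepDom O ∪ {P0}) g := by
  intro hpart
  set q : ℕ → Pref (Finset O) := fun j => if j = 0 then P0 else if j = 1 then sepPref T₁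
    else sepPref T₂ with hq
  have hdom : Profile.inDomain (N := {0, 1, 2}) (fun j _ => q j) (SepDom O ∪ {P0}) := by
    intro j _
    simp only [hq]
    split_ifs
    · exact Or.inr rfl
    all_goals exact Or.inl (sepPref_mem_sepDom _)
  have hall : (({0, 1, 2} : Finset ℕ).image fun j => (sepPref (q j).top).top) =
      insert P0.top {T₁, T₂} := by
    simp [hq, top_sepPref]
  have hrest : ((({0, 1, 2} : Finset ℕ).erase 0).image fun j => (sepPref (q j).top).top) =
      {T₁, T₂} := by
    simp [hq, top_sepPref]
  have h := hpart {0, 1, 2} (by decide) _ hdom 0 (by simp)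
  rw [Pref.wpref, hg.apply_eq (by simp) hdom, hg.apply_eq (by decide) (hdom.erase 0),
    quotaRule, quotaRule, distinctTops_of_fun, distinctTops_of_fun, hall, hrest] at h
  exact (@not_le _ P0 _ _).mpr hworse h

end Violation

section Computations

variable {O : Type*} [Fintype O] [DecidableEq O] {S G : Finset O} {x : O}

lemma quota_lt_pair_insert (hx : x ∉ S) :
    quota (fun n k => n < 2 * k) {S, insert x S} = S := by
  ext y
  rw [mem_quota, card_pair_insert hx, card_filter_mem_pair_insert hx]
  split_ifs <;> simp [*]

lemma quota_le_pair_insert (hx : x ∉ S) :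
    quota (fun n k => n ≤ 2 * k) {S, insert x S} = insert x S := by
  ext y
  rw [mem_quota, card_pair_insert hx, card_filter_mem_pair_insert hx]
  split_ifs <;> simp [*]

lemma quota_lt_triple_insert (hx : x ∉ S) (hxG : x ∈ G)
    (hG : G ∉ ({S, insert x S} : Finset (Finset O))) :
    quota (fun n k => n < 2 * k) (insert G {S, insert x S}) = insert x S := by
  ext y
  rw [mem_quota, Finset.card_insert_of_notMem hG, card_pair_insert hx,
    card_filter_mem_insert hG, card_filter_mem_pair_insert hx]
  split_ifs <;> simp_all

lemma quota_le_triple_insert (hx : x ∉ S) (hxG : x ∉ G)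
    (hG : G ∉ ({S, insert x S} : Finset (Finset O))) :
    quota (fun n k => n ≤ 2 * k) (insert G {S, insert x S}) = S := by
  ext y
  rw [mem_quota, Finset.card_insert_of_notMem hG, card_pair_insert hx,
    card_filter_mem_insert hG, card_filter_mem_pair_insert hx]
  split_ifs <;> simp_all

end Computations

section Maximality

variable {O : Type*} [Fintype O] [DecidableEq O]

lemma exists_pref_insert_of_not_separable {p : Pref (Finset O)} (h : ¬ Separable p) :
    ∃ x S S', x ∉ S ∧ x ∉ S' ∧ p.pref S (insert x S) ∧ p.pref (insert x S') S' := by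
  simp only [Separable, not_forall, exists_prop] at h
  obtain ⟨S, x, hxS, h⟩ := h
  have hlt {A B : Finset O} (hAB : A ≠ B) (hAB' : ¬ p.pref A B) : p.pref B A :=
    @lt_of_le_of_ne _ p.toPartialOrder _ _ ((@not_lt _ p _ _).mp hAB') hAB
  have hne : insert x S ≠ S := fun h' => hxS (h' ▸ Finset.mem_insert_self x S)
  by_cases hx : p.pref {x} ∅
  · exact ⟨x, S, ∅, hxS, Finset.notMem_empty x, hlt hne fun h' => h (iff_of_true h' hx), hx⟩
  · exact ⟨x, ∅, S, Finset.notMem_empty x, hxS, hlt (Finset.singleton_ne_empty x) hx,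
      by_contra fun h' => h (iff_of_false h' hx)⟩

variable {P0 : Pref (Finset O)} {S : Finset O} {x : O} {g : Rule (Finset O)}

lemma not_participationOn_fGt (hxS : x ∉ S) (hx : x ∈ P0.top) (h : P0.pref S (insert x S))
    (hg : IsTopsOnlyExtensionOn (SepDom O ∪ {P0}) (fGt O) g) :
    ¬ ParticipationOn (SepDom O ∪ {P0}) g := by
  rw [fGt_eq_quotaRule] at hg
  refine not_participationOn_quotaRule (T₁ := S) (T₂ := insert x S) ?_ hg
  have hG : P0.top ∉ ({S, insert x S} : Finset (Finset O)) := by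
    simp only [Finset.mem_insert, Finset.mem_singleton, not_or]
    exact ⟨fun h' => hxS (h' ▸ hx), fun h' => (@not_lt _ P0 _ _).mpr (P0.le_top S) (h' ▸ h)⟩
  rwa [quota_lt_pair_insert hxS, quota_lt_triple_insert hxS hx hG]

lemma not_participationOn_fGe (hxS : x ∉ S) (hx : x ∉ P0.top) (h : P0.pref (insert x S) S)
    (hg : IsTopsOnlyExtensionOn (SepDom O ∪ {P0}) (fGe O) g) :
    ¬ ParticipationOn (SepDom O ∪ {P0}) g := by
  rw [fGe_eq_quotaRule] at hg
  refine not_participationOn_quotaRule (T₁ := S) (T₂ := insert x S) ?_ hg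
  have hG : P0.top ∉ ({S, insert x S} : Finset (Finset O)) := by
    simp only [Finset.mem_insert, Finset.mem_singleton, not_or]
    exact ⟨fun h' => (@not_lt _ P0 _ _).mpr (P0.le_top _) (h' ▸ h),
      fun h' => hx (h' ▸ Finset.mem_insert_self x S)⟩
  rwa [quota_le_pair_insert hxS, quota_le_triple_insert hxS hx hG]

lemma exists_mem_ruleClassG_not_participationOn (h0 : P0 ∉ SepDom O) :
    ∃ f ∈ RuleClassG O, ∀ g : Rule (Finset O),
      IsTopsOnlyExtensionOn (SepDom O ∪ {P0}) f g → ¬ ParticipationOn (SepDom O ∪ {P0}) g := by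
  obtain ⟨x, S, S', hxS, hxS', hworse, hbetter⟩ := exists_pref_insert_of_not_separable h0
  by_cases hx : x ∈ P0.top
  · exact ⟨fGt O, fGt_mem_ruleClassG, fun _ => not_participationOn_fGt hxS hx hworse⟩
  · exact ⟨fGe O, fGe_mem_ruleClassG, fun _ => not_participationOn_fGe hxS' hx hbetter⟩

end Maximality

theorem stmt_11_general {O : Type*} [Fintype O] [DecidableEq O] :
    MaximalForG O (SepDom O) (RuleClassG O) ∧
    ∀ Dstar : Set (Pref (Finset O)), SepDom O ⊆ Dstar →
      MaximalForG O Dstar (RuleClassG O) → Dstar = SepDom O := by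
  have hSep : MaximalForG O (SepDom O) (RuleClassG O) :=
    ⟨fun _ hf _ hg => hg.participationOn_sepDom hf.2,
      fun _ => exists_mem_ruleClassG_not_participationOn⟩
  refine ⟨hSep, fun Dstar hsub hmax => Set.Subset.antisymm (fun P0 hP0 => ?_) hsub⟩
  by_contra h0
  obtain ⟨f, hf, hviol⟩ := exists_mem_ruleClassG_not_participationOn h0
  obtain ⟨g, hg⟩ := exists_isTopsOnlyExtensionOn hf.1 Dstar
  have hD : SepDom O ∪ {P0} ⊆ Dstar := Set.union_subset hsub (Set.singleton_subset_iff.mpr hP0)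
  exact hviol g (hg.mono hD) ((hmax.1 f hf g hg).mono hD)

/-- The domain `𝒮` of separable preferences is maximal for the class
`𝒢` of tops-only rules satisfying participation: (i) `𝒮` itself satisfies the two
defining conditions of maximality for `𝒢`, and (ii) any domain `𝒮 ⊆ Dstar ⊆ 𝒰_𝒪` that
is maximal for `𝒢` equals `𝒮`. -/
theorem stmt_11 {O : Type*} [Fintype O] [DecidableEq O] (hO : 2 ≤ Fintype.card O) :
    MaximalForG O (SepDom O) (RuleClassG O) ∧
    ∀ Dstar : Set (Pref (Finset O)), SepDom O ⊆ Dstar →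
      MaximalForG O Dstar (RuleClassG O) → Dstar = SepDom O :=
  stmt_11_general
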